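/- arXiv:2011.07769 — 3 statements merged into one kernel-verified Lean document; each statement's English description precedes it below -/
import Mathlib

section
/- Let A ∈ ℝ^{N×N} be an irreducible SDDM matrix (hence invertible), let b ∈ ℝ^N, and let x = A⁻¹b. Let à ∈ ℝ^{(N+1)×(N+1)} be the extended matrix à = [[A, −A𝟏], [−𝟏ᵀA, 𝟏ᵀA𝟏]]. Then a vector y ∈ ℝ^{N+1} satisfies à y = (b; −𝟏ᵀb) if and only if y = (x; 0) + c·𝟏_{N+1} for some c ∈ ℝ, where 𝟏_{N+1} ∈ ℝ^{N+1} is the all-ones vector. In particular, solving the irreducible SDDM system Ax = b is equivalent to solving this irreducible Laplacian system. -/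
/-!
The product `Ã y` only sees the differences `w i = y i - y (N+1)`: its first `N` entries are
`A w`, and since the last row of `Ã` is minus the sum of the others, its last entry is
`-𝟏ᵀ(A w)`. Hence `Ã y = (b; -𝟏ᵀb)` says exactly `A w = b`, i.e. `w = A⁻¹ b` (`A` is positive
definite, so invertible), which is the statement that `y - y (N+1) • 𝟏 = (A⁻¹ b; 0)`.
-/

open Matrix Finset

/-- A symmetric matrix is irreducible if there is no nonempty proper subset `S` of the index
set with `A i j = 0` for all `i ∈ S` and `j ∉ S`. -/
def IsIrreducibleMat {N : ℕ} (A : Matrix (Fin N) (Fin N) ℝ) : Prop :=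
  ¬ ∃ S : Set (Fin N), S.Nonempty ∧ S ≠ Set.univ ∧ ∀ i ∈ S, ∀ j ∉ S, A i j = 0

/-- `A` is symmetric diagonally dominant: `A = Aᵀ` and `a_ii ≥ ∑_{j ≠ i} |a_ij|`. -/
def IsSDD {N : ℕ} (A : Matrix (Fin N) (Fin N) ℝ) : Prop :=
  A.IsSymm ∧ ∀ i, ∑ j ∈ Finset.univ.filter (· ≠ i), |A i j| ≤ A i i

/-- `A` is an SDDM matrix: SDD, positive definite, and non-positive off-diagonal entries. -/
def IsSDDM {N : ℕ} (A : Matrix (Fin N) (Fin N) ℝ) : Prop :=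
  IsSDD A ∧ A.PosDef ∧ ∀ i j, i ≠ j → A i j ≤ 0

/-- The extended matrix `Ã = [[A, −A𝟏], [−𝟏ᵀA, 𝟏ᵀA𝟏]] ∈ ℝ^{(N+1)×(N+1)}`. -/
noncomputable def extendMat {N : ℕ} (A : Matrix (Fin N) (Fin N) ℝ) :
    Matrix (Fin (N + 1)) (Fin (N + 1)) ℝ :=
  Matrix.of fun i j =>
    if hi : (i : ℕ) < N then
      if hj : (j : ℕ) < N then A ⟨i, hi⟩ ⟨j, hj⟩
      else -∑ m, A ⟨i, hi⟩ m
    else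
      if hj : (j : ℕ) < N then -∑ m, A m ⟨j, hj⟩
      else ∑ m, ∑ l, A m l

theorem Matrix.mulVec_eq_iff_eq_inv_mulVec {n R : Type*} [Fintype n] [DecidableEq n] [CommRing R]
    {A : Matrix n n R} (hA : IsUnit A) {v b : n → R} : A *ᵥ v = b ↔ v = A⁻¹ *ᵥ b := by
  have hdet := (isUnit_iff_isUnit_det A).mp hA
  constructor
  · rintro rfl
    rw [mulVec_mulVec, nonsing_inv_mul A hdet, one_mulVec]
  · rintro rfl
    rw [mulVec_mulVec, mul_nonsing_inv A hdet, one_mulVec]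

theorem Fin.exists_eq_snoc_zero_add_const_iff {n : ℕ} {R : Type*} [AddCommGroup R]
    (y : Fin (n + 1) → R) (x : Fin n → R) :
    (∃ c, y = Fin.snoc x 0 + Function.const (Fin (n + 1)) c) ↔
      (fun i => y i.castSucc - y (Fin.last n)) = x := by
  constructor
  · rintro ⟨c, rfl⟩
    ext i
    simp
  · rintro rfl
    refine ⟨y (Fin.last n), funext fun k => ?_⟩
    induction k using Fin.lastCases <;> simp

section extendMat

variable {N : ℕ} (A : Matrix (Fin N) (Fin N) ℝ)

@[simp]
theorem extendMat_castSucc_castSucc (i j : Fin N) :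
    extendMat A i.castSucc j.castSucc = A i j := by
  simp [extendMat]

@[simp]
theorem extendMat_castSucc_last (i : Fin N) :
    extendMat A i.castSucc (Fin.last N) = -∑ j, A i j := by
  simp [extendMat]

@[simp]
theorem extendMat_last_castSucc (j : Fin N) :
    extendMat A (Fin.last N) j.castSucc = -∑ i, A i j := by
  simp [extendMat]

@[simp]
theorem extendMat_last_last :
    extendMat A (Fin.last N) (Fin.last N) = ∑ i, ∑ j, A i j := by
  simp [extendMat]

theorem extendMat_last_row (j : Fin (N + 1)) :
    extendMat A (Fin.last N) j = -∑ i : Fin N, extendMat A i.castSucc j := by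
  induction j using Fin.lastCases <;> simp

theorem extendMat_mulVec_castSucc (y : Fin (N + 1) → ℝ) (i : Fin N) :
    (extendMat A *ᵥ y) i.castSucc = (A *ᵥ fun j => y j.castSucc - y (Fin.last N)) i := by
  simp only [mulVec, dotProduct, Fin.sum_univ_castSucc, extendMat_castSucc_castSucc,
    extendMat_castSucc_last, neg_mul, Finset.sum_mul, mul_sub, Finset.sum_sub_distrib]
  ring

theorem extendMat_mulVec_last (y : Fin (N + 1) → ℝ) :
    (extendMat A *ᵥ y) (Fin.last N) = -∑ i : Fin N, (extendMat A *ᵥ y) i.castSucc := by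
  simp only [mulVec, dotProduct, extendMat_last_row, neg_mul, Finset.sum_neg_distrib,
    Finset.sum_mul]
  rw [Finset.sum_comm]

theorem extendMat_mulVec (y : Fin (N + 1) → ℝ) :
    extendMat A *ᵥ y =
      Fin.snoc (A *ᵥ fun j => y j.castSucc - y (Fin.last N))
        (-∑ i, (A *ᵥ fun j => y j.castSucc - y (Fin.last N)) i) := by
  ext k
  induction k using Fin.lastCases with
  | last => simp [extendMat_mulVec_last, extendMat_mulVec_castSucc]
  | cast i => simp [extendMat_mulVec_castSucc]

end extendMat

theorem extended_system_solutions_general {N : ℕ} (A : Matrix (Fin N) (Fin N) ℝ)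
    (hA : IsSDDM A) (b : Fin N → ℝ)
    (y : Fin (N + 1) → ℝ) :
    extendMat A *ᵥ y = Fin.snoc b (-∑ i, b i) ↔
      ∃ c : ℝ, y = Fin.snoc (A⁻¹ *ᵥ b) 0 + Function.const (Fin (N + 1)) c := by
  rw [extendMat_mulVec, Fin.snoc_inj, Fin.exists_eq_snoc_zero_add_const_iff,
    ← mulVec_eq_iff_eq_inv_mulVec hA.2.1.isUnit]
  exact and_iff_left_of_imp fun h => by rw [h]

/-- Solving the irreducible SDDM system `A x = b` is equivalent to solving the extended
irreducible Laplacian system: `Ã y = (b; −𝟏ᵀb)` iff `y = (A⁻¹b; 0) + c·𝟏` for some `c`. -/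
theorem extended_system_solutions {N : ℕ} (A : Matrix (Fin N) (Fin N) ℝ)
    (hA : IsSDDM A) (hirr : IsIrreducibleMat A) (b : Fin N → ℝ)
    (y : Fin (N + 1) → ℝ) :
    extendMat A *ᵥ y = Fin.snoc b (-∑ i, b i) ↔
      ∃ c : ℝ, y = Fin.snoc (A⁻¹ *ᵥ b) 0 + Function.const (Fin (N + 1)) c :=
  extended_system_solutions_general A hA b y
end

section
/- Let A ∈ ℝ^{N×N} be a nonsingular irreducible SDD matrix with at least one positive off-diagonal entry, write A = A_d + A_n + A_p where A_d, A_n, A_p contain the diagonal, negative off-diagonal, and positive off-diagonal entries of A, respectively, and let à ∈ ℝ^{2N×2N} be the block matrix à = [[A_d + A_n, −A_p], [−A_p, A_d + A_n]]. Then à is SDD with all off-diagonal entries non-positive; and if a_ii = ∑_{j≠i} |a_ij| for every i, then for any b ∈ ℝ^N and any y = (x₁; −x₂) ∈ ℝ^{2N} satisfying à y = (b; −b), one has x₁ + x₂ = 2A⁻¹b and x₁ − x₂ ∈ span{𝟏}; consequently the solution set of à y = (b; −b) is { (x; −x) + c·𝟏_{2N} : c ∈ ℝ } with x = A⁻¹b,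 and (x; −x) is the unique solution orthogonal to the all-ones vector 𝟏_{2N}. -/
open Matrix Finset

/-- The diagonal part `A_d` of `A`. -/
def Adiag {N : ℕ} (A : Matrix (Fin N) (Fin N) ℝ) : Matrix (Fin N) (Fin N) ℝ :=
  Matrix.of fun i j => if i = j then A i j else 0

/-- The negative off-diagonal part `A_n` of `A`. -/
noncomputable def Aneg {N : ℕ} (A : Matrix (Fin N) (Fin N) ℝ) : Matrix (Fin N) (Fin N) ℝ :=
  Matrix.of fun i j => if i = j then 0 else min (A i j) 0

/-- The positive off-diagonal part `A_p` of `A`. -/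
noncomputable def Apos {N : ℕ} (A : Matrix (Fin N) (Fin N) ℝ) : Matrix (Fin N) (Fin N) ℝ :=
  Matrix.of fun i j => if i = j then 0 else max (A i j) 0

/-- The extended matrix `Ã = [[A_d + A_n, −A_p], [−A_p, A_d + A_n]] ∈ ℝ^{2N×2N}`. -/
noncomputable def tildeMat {N : ℕ} (A : Matrix (Fin N) (Fin N) ℝ) :
    Matrix (Fin N ⊕ Fin N) (Fin N ⊕ Fin N) ℝ :=
  Matrix.fromBlocks (Adiag A + Aneg A) (-(Apos A)) (-(Apos A)) (Adiag A + Aneg A)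


/-! With `Q = A_d + A_n` and `P = A_p`, adding and subtracting the two block rows of
`Ã (u; v) = (b; -b)` turns it into `(Q + P)(u - v) = 2b` and `(Q - P)(u + v) = 0`. Here
`Q + P = A` is invertible, while `Q - P` has diagonal `a_ii` and off-diagonal entries `-|a_ij|`;
when every row of `A` is exactly balanced, `Q - P` has zero row sums, and a maximum principle
together with irreducibility shows that its kernel consists of the constant vectors. -/

lemma abs_min_zero_add_abs_max_zero (a : ℝ) : |min a 0| + |max a 0| = |a| := by
  rcases le_total a 0 with h | h
  · simp [min_eq_left h, max_eq_right h, abs_of_nonpos h]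
  · simp [min_eq_right h, max_eq_left h, abs_of_nonneg h]

lemma min_zero_sub_max_zero (a : ℝ) : min a 0 - max a 0 = -|a| := by
  rcases le_total a 0 with h | h
  · simp [min_eq_left h, max_eq_right h, abs_of_nonpos h]
  · simp [min_eq_right h, max_eq_left h, abs_of_nonneg h]

namespace Matrix

variable {ι : Type*} [Fintype ι]

theorem mulVec_eq_iff_eq_nonsing_inv_mulVec [DecidableEq ι] {A : Matrix ι ι ℝ}
    (hA : IsUnit A.det) {x y : ι → ℝ} : A *ᵥ x = y ↔ x = A⁻¹ *ᵥ y := by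
  constructor
  · rintro rfl
    rw [mulVec_mulVec, nonsing_inv_mul _ hA, one_mulVec]
  · rintro rfl
    rw [mulVec_mulVec, mul_nonsing_inv _ hA, one_mulVec]

/-- Maximum principle: if `x` is maximal at `i₀` and `x i = x i₀`, row `i` of `M *ᵥ x = 0` reads
`∑ k, M i k * (x k - x i₀) = 0`, a sum of nonnegative terms; so no edge of `M` leaves the set of
maximisers, which is therefore everything. -/
theorem mulVec_eq_zero_iff_exists_const {M : Matrix ι ι ℝ}
    (hoff : ∀ i j, i ≠ j → M i j ≤ 0) (hrow : ∀ i, ∑ j, M i j = 0)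
    (hirr : ∀ S : Set ι, S.Nonempty → (∀ i ∈ S, ∀ j ∉ S, M i j = 0) → S = Set.univ)
    {x : ι → ℝ} : M *ᵥ x = 0 ↔ ∃ c, x = Function.const ι c := by
  refine ⟨fun hx => ?_, ?_⟩
  · cases isEmpty_or_nonempty ι
    · exact ⟨0, Subsingleton.elim _ _⟩
    obtain ⟨i₀, hi₀⟩ := Finite.exists_max x
    have hmax : ∀ i ∈ {k | x k = x i₀}, ∀ j ∉ {k | x k = x i₀}, M i j = 0 := by
      intro i hi j hj
      have hsum : ∑ k, M i k * (x k - x i₀) = 0 := by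
        have hrow_i : ∑ k, M i k * x k = 0 := congrFun hx i
        simp [mul_sub, ← Finset.sum_mul, hrow, hrow_i]
      have hterm : ∀ k ∈ univ, 0 ≤ M i k * (x k - x i₀) := by
        intro k _
        rcases eq_or_ne i k with rfl | hik
        · simp [show x i = x i₀ from hi]
        · exact mul_nonneg_of_nonpos_of_nonpos (hoff i k hik) (sub_nonpos.2 (hi₀ k))
      have hij := (Finset.sum_eq_zero_iff_of_nonneg hterm).1 hsum j (mem_univ j)
      exact (mul_eq_zero.1 hij).resolve_right (sub_ne_zero.2 hj)
    have hall := hirr {k | x k = x i₀} ⟨i₀, rfl⟩ hmax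
    exact ⟨x i₀, funext fun j => Set.eq_univ_iff_forall.1 hall j⟩
  · rintro ⟨c, rfl⟩
    ext i
    simp [mulVec, dotProduct, ← Finset.sum_mul, hrow]

theorem fromBlocks_neg_mulVec_sumElim_eq_iff {m n : Type*} [Fintype n] (Q P : Matrix m n ℝ)
    (u v : n → ℝ) (b : m → ℝ) :
    fromBlocks Q (-P) (-P) Q *ᵥ Sum.elim u v = Sum.elim b (-b) ↔
      (Q + P) *ᵥ (u - v) = (2 : ℝ) • b ∧ (Q - P) *ᵥ (u + v) = 0 := by
  simp only [fromBlocks_mulVec, Sum.elim_comp_inl, Sum.elim_comp_inr, Sum.elim_eq_iff,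
    add_mulVec, sub_mulVec, mulVec_add, mulVec_sub, neg_mulVec]
  constructor
  · rintro ⟨h₁, h₂⟩
    constructor
    · linear_combination (norm := module) h₁ - h₂
    · linear_combination (norm := module) h₁ + h₂
  · rintro ⟨h₁, h₂⟩
    constructor
    · linear_combination (norm := module) (2⁻¹ : ℝ) • h₁ + (2⁻¹ : ℝ) • h₂
    · linear_combination (norm := module) (2⁻¹ : ℝ) • h₂ - (2⁻¹ : ℝ) • h₁

end Matrix

section Splitting

variable {N : ℕ} (A : Matrix (Fin N) (Fin N) ℝ)

lemma Adiag_add_Aneg_add_Apos : Adiag A + Aneg A + Apos A = A := by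
  ext i j
  by_cases h : i = j <;> simp [Adiag, Aneg, Apos, h, min_add_max]

lemma abs_Adiag_add_Aneg_add_abs_Apos (i j : Fin N) :
    |(Adiag A + Aneg A) i j| + |Apos A i j| = |A i j| := by
  by_cases h : i = j <;> simp [Adiag, Aneg, Apos, h, abs_min_zero_add_abs_max_zero]

lemma Adiag_transpose : (Adiag A)ᵀ = Adiag Aᵀ := by
  ext i j
  by_cases h : i = j <;> simp [Adiag, h, eq_comm]

lemma Aneg_transpose : (Aneg A)ᵀ = Aneg Aᵀ := by
  ext i j
  by_cases h : i = j <;> simp [Aneg, h, eq_comm]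

lemma Apos_transpose : (Apos A)ᵀ = Apos Aᵀ := by
  ext i j
  by_cases h : i = j <;> simp [Apos, h, eq_comm]

lemma tildeMat_transpose : (tildeMat A)ᵀ = tildeMat Aᵀ := by
  simp only [tildeMat, fromBlocks_transpose, transpose_add, transpose_neg, Adiag_transpose,
    Aneg_transpose, Apos_transpose]

variable {A} in
lemma tildeMat_isSymm (hA : A.IsSymm) : (tildeMat A).IsSymm := by
  rw [IsSymm, tildeMat_transpose, hA.eq]

lemma tildeMat_apply_nonpos {i j : Fin N ⊕ Fin N} (hij : i ≠ j) : tildeMat A i j ≤ 0 := by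
  have hQ : ∀ i j, i ≠ j → (Adiag A + Aneg A) i j ≤ 0 := fun i j h => by
    simp [Adiag, Aneg, h]
  have hP : ∀ i j, 0 ≤ Apos A i j := fun i j => by
    by_cases h : i = j <;> simp [Apos, h]
  rcases i with i | i <;> rcases j with j | j <;> simp_all [tildeMat]

variable {A} in
lemma tildeMat_diag_dominant
    (hA : ∀ i, ∑ j ∈ univ.filter (· ≠ i), |A i j| ≤ A i i) (i : Fin N ⊕ Fin N) :
    ∑ j ∈ univ.filter (· ≠ i), |tildeMat A i j| ≤ tildeMat A i i := by
  rcases i with i | i <;>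
  · have hrow := hA i
    rw [filter_ne', sum_erase_eq_sub (mem_univ _)] at hrow ⊢
    have hdiag : (Adiag A + Aneg A) i i = A i i := by simp [Adiag, Aneg]
    have hsum : ∑ j, |(Adiag A + Aneg A) i j| + ∑ j, |Apos A i j| = ∑ j, |A i j| := by
      rw [← sum_add_distrib]
      exact sum_congr rfl fun j _ => abs_Adiag_add_Aneg_add_abs_Apos A i j
    simp only [tildeMat, Fintype.sum_sum_type, fromBlocks_apply₁₁, fromBlocks_apply₁₂,
      fromBlocks_apply₂₁, fromBlocks_apply₂₂, Matrix.neg_apply, abs_neg, hdiag]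
    linarith

/-- For `A` with nonnegative diagonal, this is Ostrowski's comparison matrix of `A`. -/
noncomputable def comparisonMat : Matrix (Fin N) (Fin N) ℝ :=
  Adiag A + Aneg A - Apos A

lemma comparisonMat_apply (i j : Fin N) :
    comparisonMat A i j = if i = j then A i i else -|A i j| := by
  by_cases h : i = j <;> simp [comparisonMat, Adiag, Aneg, Apos, h, min_zero_sub_max_zero]

lemma tildeMat_mulVec_sumElim_eq_iff (u v b : Fin N → ℝ) :
    tildeMat A *ᵥ Sum.elim u v = Sum.elim b (-b) ↔
      A *ᵥ (u - v) = (2 : ℝ) • b ∧ comparisonMat A *ᵥ (u + v) = 0 := by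
  rw [tildeMat, fromBlocks_neg_mulVec_sumElim_eq_iff, Adiag_add_Aneg_add_Apos, comparisonMat]

variable {A} in
lemma comparisonMat_mulVec_eq_zero_iff (hirr : IsIrreducibleMat A)
    (hA : ∀ i, A i i = ∑ j ∈ univ.filter (· ≠ i), |A i j|) {w : Fin N → ℝ} :
    comparisonMat A *ᵥ w = 0 ↔ ∃ c, w = Function.const (Fin N) c := by
  refine mulVec_eq_zero_iff_exists_const (fun i j hij => ?_) (fun i => ?_) (fun S hS hout => ?_)
  · simp [comparisonMat_apply, hij]
  · have hoff : ∑ j ∈ univ.erase i, comparisonMat A i j = -∑ j ∈ univ.erase i, |A i j| := by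
      rw [← sum_neg_distrib]
      refine sum_congr rfl fun j hj => ?_
      rw [comparisonMat_apply, if_neg (ne_of_mem_erase hj).symm]
    rw [← add_sum_erase _ _ (mem_univ i), hoff, comparisonMat_apply, if_pos rfl, hA i, filter_ne',
      add_neg_cancel]
  · by_contra hne
    refine hirr ⟨S, hS, hne, fun i hi j hj => ?_⟩
    have hij : i ≠ j := by rintro rfl; exact hj hi
    simpa [comparisonMat_apply, hij] using hout i hi j hj

end Splitting

lemma exists_sumElim_eq_add_const_iff {ι : Type*} (u v p : ι → ℝ) :
    (∃ c, Sum.elim u v = Sum.elim p (-p) + Function.const (ι ⊕ ι) c) ↔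
      u - v = (2 : ℝ) • p ∧ ∃ d, u + v = Function.const ι d := by
  simp only [← Sum.elim_const_const, ← Sum.elim_add_add, Sum.elim_eq_iff]
  constructor
  · rintro ⟨c, rfl, rfl⟩
    exact ⟨by module, 2 * c, funext fun i => by
      simp only [Pi.add_apply, Pi.neg_apply, Function.const_apply]; ring⟩
  · rintro ⟨h₁, d, h₂⟩
    refine ⟨d / 2, funext fun i => ?_, funext fun i => ?_⟩ <;>
    · have h₁i := congrFun h₁ i
      have h₂i := congrFun h₂ i
      simp only [Pi.sub_apply, Pi.add_apply, Pi.neg_apply, Pi.smul_apply, smul_eq_mul,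
        Function.const_apply] at h₁i h₂i ⊢
      linarith

lemma exists_eq_add_const_and_sum_eq_zero_iff {ι : Type*} [Fintype ι] {y z : ι → ℝ}
    (hz : ∑ i, z i = 0) : ((∃ c, y = z + Function.const ι c) ∧ ∑ i, y i = 0) ↔ y = z := by
  constructor
  · rintro ⟨⟨c, rfl⟩, hsum⟩
    have hc : (Fintype.card ι : ℝ) * c = 0 := by simpa [sum_add_distrib, hz] using hsum
    funext i
    have : Nonempty ι := ⟨i⟩
    simp [(mul_eq_zero.1 hc).resolve_left (Nat.cast_ne_zero.2 Fintype.card_ne_zero)]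
  · rintro rfl
    exact ⟨⟨0, by simp⟩, hz⟩

theorem tilde_SDD_and_solutions_general {N : ℕ} (A : Matrix (Fin N) (Fin N) ℝ)
    (hA : IsSDD A) (hirr : IsIrreducibleMat A) (hns : IsUnit A.det) :
    ((tildeMat A).IsSymm ∧
      ∀ i, ∑ j ∈ Finset.univ.filter (· ≠ i), |tildeMat A i j| ≤ tildeMat A i i) ∧
    (∀ i j, i ≠ j → tildeMat A i j ≤ 0) ∧
    ((∀ i, A i i = ∑ j ∈ Finset.univ.filter (· ≠ i), |A i j|) →
      ∀ b : Fin N → ℝ,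
        (∀ x₁ x₂ : Fin N → ℝ,
          tildeMat A *ᵥ Sum.elim x₁ (-x₂) = Sum.elim b (-b) →
            x₁ + x₂ = (2 : ℝ) • (A⁻¹ *ᵥ b) ∧
            ∃ c : ℝ, x₁ - x₂ = Function.const (Fin N) c) ∧
        (∀ y : Fin N ⊕ Fin N → ℝ,
          tildeMat A *ᵥ y = Sum.elim b (-b) ↔
            ∃ c : ℝ, y = Sum.elim (A⁻¹ *ᵥ b) (-(A⁻¹ *ᵥ b)) +
              Function.const (Fin N ⊕ Fin N) c) ∧
        (∀ y : Fin N ⊕ Fin N → ℝ,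
          (tildeMat A *ᵥ y = Sum.elim b (-b) ∧ ∑ i, y i = 0) ↔
            y = Sum.elim (A⁻¹ *ᵥ b) (-(A⁻¹ *ᵥ b)))) := by
  refine ⟨⟨tildeMat_isSymm hA.1, tildeMat_diag_dominant hA.2⟩,
    fun _ _ => tildeMat_apply_nonpos A, fun hEq b => ?_⟩
  have hsol : ∀ u v, tildeMat A *ᵥ Sum.elim u v = Sum.elim b (-b) ↔
      u - v = (2 : ℝ) • (A⁻¹ *ᵥ b) ∧ ∃ c, u + v = Function.const (Fin N) c := fun u v => by
    rw [tildeMat_mulVec_sumElim_eq_iff, comparisonMat_mulVec_eq_zero_iff hirr hEq,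
      mulVec_eq_iff_eq_nonsing_inv_mulVec hns, mulVec_smul]
  have hset : ∀ y, tildeMat A *ᵥ y = Sum.elim b (-b) ↔
      ∃ c, y = Sum.elim (A⁻¹ *ᵥ b) (-(A⁻¹ *ᵥ b)) + Function.const (Fin N ⊕ Fin N) c :=
    fun y => by rw [← Sum.elim_comp_inl_inr y, hsol, exists_sumElim_eq_add_const_iff]
  refine ⟨fun x₁ x₂ h => ?_, hset, fun y => ?_⟩
  · obtain ⟨hsub, c, hadd⟩ := (hsol x₁ (-x₂)).1 h
    exact ⟨by rwa [sub_neg_eq_add] at hsub, c, by rwa [← sub_eq_add_neg] at hadd⟩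
  · rw [hset, exists_eq_add_const_and_sum_eq_zero_iff]
    simp [Fintype.sum_sum_type]

/-- For a nonsingular irreducible SDD matrix `A` with at least one positive off-diagonal
entry, the matrix `Ã = [[A_d + A_n, −A_p], [−A_p, A_d + A_n]]` is SDD with all
off-diagonal entries non-positive; and if `a_ii = ∑_{j≠i} |a_ij|` for every `i`, then for
any `b` and any solution `y = (x₁; −x₂)` of `Ã y = (b; −b)` one has `x₁ + x₂ = 2A⁻¹b` and
`x₁ − x₂ ∈ span{𝟏}`; the solution set of `Ã y = (b; −b)` is
`{(x; −x) + c𝟏 : c ∈ ℝ}` with `x = A⁻¹b`, and `(x; −x)` is the unique solution orthogonal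
to the all-ones vector. -/
theorem tilde_SDD_and_solutions {N : ℕ} (A : Matrix (Fin N) (Fin N) ℝ)
    (hA : IsSDD A) (hirr : IsIrreducibleMat A) (hns : IsUnit A.det)
    (hpos : ∃ i j, i ≠ j ∧ 0 < A i j) :
    ((tildeMat A).IsSymm ∧
      ∀ i, ∑ j ∈ Finset.univ.filter (· ≠ i), |tildeMat A i j| ≤ tildeMat A i i) ∧
    (∀ i j, i ≠ j → tildeMat A i j ≤ 0) ∧
    ((∀ i, A i i = ∑ j ∈ Finset.univ.filter (· ≠ i), |A i j|) →
      ∀ b : Fin N → ℝ,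
        (∀ x₁ x₂ : Fin N → ℝ,
          tildeMat A *ᵥ Sum.elim x₁ (-x₂) = Sum.elim b (-b) →
            x₁ + x₂ = (2 : ℝ) • (A⁻¹ *ᵥ b) ∧
            ∃ c : ℝ, x₁ - x₂ = Function.const (Fin N) c) ∧
        (∀ y : Fin N ⊕ Fin N → ℝ,
          tildeMat A *ᵥ y = Sum.elim b (-b) ↔
            ∃ c : ℝ, y = Sum.elim (A⁻¹ *ᵥ b) (-(A⁻¹ *ᵥ b)) +
              Function.const (Fin N ⊕ Fin N) c) ∧
        (∀ y : Fin N ⊕ Fin N → ℝ,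
          (tildeMat A *ᵥ y = Sum.elim b (-b) ∧ ∑ i, y i = 0) ↔
            y = Sum.elim (A⁻¹ *ᵥ b) (-(A⁻¹ *ᵥ b)))) :=
  tilde_SDD_and_solutions_general A hA hirr hns
end

section
/- Let A ∈ ℝ^{N×N} be a nonsingular irreducible SDD matrix with at least one positive off-diagonal entry and with a_ii > ∑_{j≠i} |a_ij| for at least one index i. Write A = A_d + A_n + A_p and à = [[A_d + A_n, −A_p], [−A_p, A_d + A_n]] ∈ ℝ^{2N×2N}. Then for any b ∈ ℝ^N, the system à y = (b; −b) with y = (x₁; −x₂) has the unique solution x₁ = x₂ = A⁻¹b; that is, y = (x; −x) where x solves Ax = b. -/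
open Matrix Finset

lemma key {N : ℕ} (A : Matrix (Fin N) (Fin N) ℝ) (hA : IsSDD A)
    (hirr : IsIrreducibleMat A)
    (hstrict : ∃ i, ∑ j ∈ Finset.univ.filter (· ≠ i), |A i j| < A i i)
    (w : Fin N → ℝ) (hw : (Adiag A + Aneg A - Apos A) *ᵥ w = 0) : w = 0 := by
  by_contra hne
  have hex : ∃ i, w i ≠ 0 := by
    by_contra h
    push_neg at h
    exact hne (funext fun i => h i)
  obtain ⟨i1, hi1⟩ := hex
  obtain ⟨i0, -, hmax⟩ := Finset.exists_max_image Finset.univ (fun i => |w i|) ⟨i1, mem_univ _⟩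
  set m := |w i0| with hm
  have hmpos : 0 < m := lt_of_lt_of_le (abs_pos.mpr hi1) (hmax i1 (mem_univ _))
  have hB : ∀ i j, (Adiag A + Aneg A - Apos A) i j = if i = j then A i i else -|A i j| := by
    intro i j
    by_cases h : i = j
    · subst h; simp [Adiag, Aneg, Apos]
    · simp only [Matrix.sub_apply, Matrix.add_apply, Adiag, Aneg, Apos, Matrix.of_apply,
        if_neg h]
      rcases le_total (A i j) 0 with h' | h'
      · rw [min_eq_left h', max_eq_right h', abs_of_nonpos h']; ring
      · rw [min_eq_right h', max_eq_left h', abs_of_nonneg h']; ring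
  have hdiag : ∀ i, 0 ≤ A i i := fun i =>
    le_trans (Finset.sum_nonneg fun j _ => abs_nonneg _) (hA.2 i)
  have row : ∀ i, |w i| = m →
      (∀ j, j ≠ i → A i j ≠ 0 → |w j| = m) ∧
      ∑ j ∈ Finset.univ.filter (· ≠ i), |A i j| = A i i := by
    intro i hi
    have h0 := congrFun hw i
    simp only [Matrix.mulVec, dotProduct, Pi.zero_apply] at h0
    rw [← Finset.add_sum_erase _ _ (mem_univ i)] at h0
    have hrow : A i i * w i = ∑ j ∈ Finset.univ.erase i, |A i j| * w j := by
      have : ∀ j ∈ Finset.univ.erase i, (Adiag A + Aneg A - Apos A) i j * w j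
          = -(|A i j| * w j) := by
        intro j hj
        rw [hB i j, if_neg (fun h => (Finset.mem_erase.mp hj).1 h.symm)]
        ring
      rw [Finset.sum_congr rfl this, Finset.sum_neg_distrib, hB i i, if_pos rfl] at h0
      linarith
    have S1 := ∑ j ∈ Finset.univ.erase i, |A i j| * |w j|
    have l1 : A i i * m ≤ ∑ j ∈ Finset.univ.erase i, |A i j| * |w j| := by
      calc A i i * m = |A i i * w i| := by
            rw [abs_mul, hi, abs_of_nonneg (hdiag i)]
        _ = |∑ j ∈ Finset.univ.erase i, |A i j| * w j| := by rw [hrow]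
        _ ≤ ∑ j ∈ Finset.univ.erase i, |(|A i j| * w j)| := Finset.abs_sum_le_sum_abs _ _
        _ = ∑ j ∈ Finset.univ.erase i, |A i j| * |w j| := by
            refine Finset.sum_congr rfl fun j _ => ?_
            rw [abs_mul, abs_abs]
    have l2le : ∀ j ∈ Finset.univ.erase i, |A i j| * |w j| ≤ |A i j| * m :=
      fun j _ => mul_le_mul_of_nonneg_left (hmax j (mem_univ _)) (abs_nonneg _)
    have l2 : ∑ j ∈ Finset.univ.erase i, |A i j| * |w j|
        ≤ ∑ j ∈ Finset.univ.erase i, |A i j| * m := Finset.sum_le_sum l2le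
    have hfe : Finset.univ.filter (· ≠ i) = Finset.univ.erase i := Finset.filter_ne' _ _
    have l3 : ∑ j ∈ Finset.univ.erase i, |A i j| * m ≤ A i i * m := by
      rw [← Finset.sum_mul]
      exact mul_le_mul_of_nonneg_right (hfe ▸ hA.2 i) hmpos.le
    have e12 : ∑ j ∈ Finset.univ.erase i, |A i j| * |w j|
        = ∑ j ∈ Finset.univ.erase i, |A i j| * m := le_antisymm l2 (by linarith)
    have eterms := (Finset.sum_eq_sum_iff_of_le l2le).mp e12
    constructor
    · intro j hj hAij
      have hjmem : j ∈ Finset.univ.erase i := Finset.mem_erase.mpr ⟨hj, mem_univ _⟩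
      have := eterms j hjmem
      exact mul_left_cancel₀ (abs_ne_zero.mpr hAij) this
    · have hsum : (∑ j ∈ Finset.univ.erase i, |A i j|) * m = A i i * m := by
        rw [Finset.sum_mul]
        linarith
      have := mul_right_cancel₀ hmpos.ne' hsum
      rw [hfe]; exact this
  have hi0 : |w i0| = m := rfl
  set S : Set (Fin N) := {i | |w i| = m} with hS
  have hedge : ∀ i ∈ S, ∀ j ∉ S, A i j = 0 := by
    intro i hi j hj
    by_contra hAij
    have hji : j ≠ i := fun h => hj (h ▸ hi)
    exact hj ((row i hi).1 j hji hAij)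
  have hSuniv : S = Set.univ := by
    by_contra hneq
    exact hirr ⟨S, ⟨i0, hi0⟩, hneq, hedge⟩
  obtain ⟨i, hi⟩ := hstrict
  have : |w i| = m := by
    have : i ∈ S := hSuniv ▸ Set.mem_univ i
    exact this
  have := (row i this).2
  linarith

lemma Asplit {N : ℕ} (A : Matrix (Fin N) (Fin N) ℝ) : Adiag A + Aneg A + Apos A = A := by
  ext i j
  by_cases h : i = j
  · subst h; simp [Adiag, Aneg, Apos]
  · simp [Adiag, Aneg, Apos, h, min_add_max]


/-- For a nonsingular irreducible SDD matrix `A` with at least one positive off-diagonal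
entry and at least one strictly dominant diagonal entry, the system `Ã y = (b; −b)` has
the unique solution `y = (x; −x)` where `x = A⁻¹ b`. -/
theorem tilde_unique_solution {N : ℕ} (A : Matrix (Fin N) (Fin N) ℝ)
    (hA : IsSDD A) (hirr : IsIrreducibleMat A) (hns : IsUnit A.det)
    (hpos : ∃ i j, i ≠ j ∧ 0 < A i j)
    (hstrict : ∃ i, ∑ j ∈ Finset.univ.filter (· ≠ i), |A i j| < A i i)
    (b : Fin N → ℝ) (y : Fin N ⊕ Fin N → ℝ) :
    tildeMat A *ᵥ y = Sum.elim b (-b) ↔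
      y = Sum.elim (A⁻¹ *ᵥ b) (-(A⁻¹ *ᵥ b)) := by
  haveI := A.invertibleOfIsUnitDet hns
  set M := Adiag A + Aneg A with hM
  set P := Apos A with hP
  have hMP : M + P = A := Asplit A
  have hAinv : A *ᵥ (A⁻¹ *ᵥ b) = b := by
    rw [Matrix.mulVec_mulVec, Matrix.mul_nonsing_inv _ hns, Matrix.one_mulVec]
  constructor
  · intro h
    set u := y ∘ Sum.inl with hu
    set v := y ∘ Sum.inr with hv
    have hy : y = Sum.elim u v := by funext s; cases s <;> rfl
    rw [hy, tildeMat, Matrix.fromBlocks_mulVec] at h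
    have h1 : M *ᵥ u + (-P) *ᵥ v = b := funext fun i => congrFun h (Sum.inl i)
    have h2 : (-P) *ᵥ u + M *ᵥ v = -b := funext fun i => congrFun h (Sum.inr i)
    have hplus : (M - P) *ᵥ (u + v) = 0 := by
      rw [Matrix.sub_mulVec, Matrix.mulVec_add, Matrix.mulVec_add]
      have := congrArg₂ (· + ·) h1 h2
      simp only [Matrix.neg_mulVec] at this ⊢
      funext i
      have := congrFun this i
      simp only [Pi.add_apply, Pi.neg_apply, Pi.sub_apply, Pi.zero_apply] at this ⊢
      linarith
    have hzero : u + v = 0 := key A hA hirr hstrict (u + v) hplus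
    have hvu : v = -u := by
      funext i
      have := congrFun hzero i
      simp only [Pi.add_apply, Pi.zero_apply, Pi.neg_apply] at this ⊢
      linarith
    have hAu : A *ᵥ u = b := by
      rw [← hMP, Matrix.add_mulVec]
      rw [hvu] at h1
      simp only [Matrix.neg_mulVec, Matrix.mulVec_neg, neg_neg] at h1
      exact h1
    have hueq : u = A⁻¹ *ᵥ b := by
      rw [← hAu, Matrix.mulVec_mulVec, Matrix.nonsing_inv_mul _ hns, Matrix.one_mulVec]
    rw [hy, hueq, hvu, hueq]
  · intro h
    subst h
    rw [tildeMat, Matrix.fromBlocks_mulVec]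
    have e1 : M *ᵥ (A⁻¹ *ᵥ b) + (-P) *ᵥ (-(A⁻¹ *ᵥ b)) = b := by
      rw [Matrix.neg_mulVec, Matrix.mulVec_neg, neg_neg, ← Matrix.add_mulVec, hMP, hAinv]
    have e2 : (-P) *ᵥ (A⁻¹ *ᵥ b) + M *ᵥ (-(A⁻¹ *ᵥ b)) = -b := by
      rw [Matrix.neg_mulVec, Matrix.mulVec_neg, ← neg_add, add_comm, ← Matrix.add_mulVec,
        hMP, hAinv]
    simp only [Sum.elim_comp_inl, Sum.elim_comp_inr]
    rw [e1, e2]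
end
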